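/- For every probability distribution π' on 𝕏, every fixed τ ≥ 1, and every D > 0: lim_{T→∞} [ (1/T) R^E_{X^T_{[π',P]}}(TD) − (1/T) R^E_{J_τ(X^T_{[π',P]})}(TD) ] = 0. -/

import Mathlib

open Filter Finset

/-- `μ` is a probability distribution on the finite set `𝕏`. -/
def IsProbDist {𝕏 : Type} [Fintype 𝕏] (μ : 𝕏 → ℝ) : Prop :=
  (∀ x, 0 ≤ μ x) ∧ ∑ x, μ x = 1

/-- `P` is a stochastic (transition probability) matrix on `𝕏`. -/
def IsStochastic {𝕏 : Type} [Fintype 𝕏] (P : 𝕏 → 𝕏 → ℝ) : Prop :=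
  (∀ x y, 0 ≤ P x y) ∧ ∀ x, ∑ y, P x y = 1

/-- `n`-th power of the transition matrix `P`. -/
def matPow {𝕏 : Type} [Fintype 𝕏] [DecidableEq 𝕏] (P : 𝕏 → 𝕏 → ℝ) : ℕ → 𝕏 → 𝕏 → ℝ
  | 0 => fun x y => if x = y then 1 else 0
  | n + 1 => fun x y => ∑ z, matPow P n x z * P z y

/-- Irreducible and aperiodic chain on a finite state space, i.e. primitive transition matrix:
some power of `P` has all entries strictly positive. -/
def IsIrreducibleAperiodic {𝕏 : Type} [Fintype 𝕏] [DecidableEq 𝕏] (P : 𝕏 → 𝕏 → ℝ) : Prop :=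
  ∃ m : ℕ, 0 < m ∧ ∀ x y, 0 < matPow P m x y

/-- `π` is a stationary distribution of `P`. -/
def IsStationaryDist {𝕏 : Type} [Fintype 𝕏] (P : 𝕏 → 𝕏 → ℝ) (π : 𝕏 → ℝ) : Prop :=
  ∀ y, ∑ x, π x * P x y = π y

/-- Law of the first `n` states of the Markov chain with initial distribution `π'`
and transition matrix `P`. -/
def markovLaw {𝕏 : Type} (π' : 𝕏 → ℝ) (P : 𝕏 → 𝕏 → ℝ) : ∀ n : ℕ, (Fin n → 𝕏) → ℝ
  | 0, _ => 1
  | n + 1, x => π' (x 0) * ∏ i : Fin n, P (x i.castSucc) (x i.succ)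

/-- Distribution of `X_{n+1}` when `X_1 ~ μ` (i.e. `μ Pⁿ`). -/
def stepDist {𝕏 : Type} [Fintype 𝕏] [DecidableEq 𝕏] (μ : 𝕏 → ℝ) (P : 𝕏 → 𝕏 → ℝ)
    (n : ℕ) : 𝕏 → ℝ :=
  fun y => ∑ x, μ x * matPow P n x y

/-- Law of `n` i.i.d. blocks, each distributed according to `q`. -/
def iidLaw {S : Type} [Fintype S] (q : S → ℝ) (n : ℕ) (x : Fin n → S) : ℝ := ∏ i, q (x i)

/-- Additive block distortion built from the single-letter distortion `d`. -/
def blockDist {𝕏 𝕐 : Type} (d : 𝕏 → 𝕐 → ℝ) (T : ℕ) (s : Fin T → 𝕏) (t : Fin T → 𝕐) : ℝ :=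
  ∑ j, d (s j) (t j)

/-- Marginal of the distribution `q` on `𝕏^T` on the last `T - τ` coordinates
(the projection `J_τ`). -/
noncomputable def projDist {𝕏 : Type} [Fintype 𝕏] [DecidableEq 𝕏] {T : ℕ}
    (q : (Fin T → 𝕏) → ℝ) (τ : ℕ) : (Fin (T - τ) → 𝕏) → ℝ :=
  fun r => ∑ s : Fin T → 𝕏,
    if (∀ i : Fin (T - τ), s ⟨τ + i.val, by have := i.isLt; omega⟩ = r i) then q s else 0

/-- Maximal value of the single-letter distortion measure. -/
noncomputable def Dmax {𝕏 𝕐 : Type} [Fintype 𝕏] [Fintype 𝕐] (d : 𝕏 → 𝕐 → ℝ) : ℝ :=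
  ⨆ p : 𝕏 × 𝕐, d p.1 p.2

/-- Minimal strictly positive value of the single-letter distortion measure. -/
noncomputable def Dmin {𝕏 𝕐 : Type} [Fintype 𝕏] [Fintype 𝕐] (d : 𝕏 → 𝕐 → ℝ) : ℝ :=
  ⨅ p : {p : 𝕏 × 𝕐 // 0 < d p.1 p.2}, d p.1.1 p.1.2

/-- Operational rate-distortion function under the expected distortion criterion, for the
source whose first `n` letters have law `law n` and with single-letter distortion `ρ`:
the infimum of all rates `R` for which there is a sequence of rate-`R` codes
`⟨eⁿ, fⁿ⟩` (with codebook size `2^⌊nR⌋`) whose expected normalized `n`-letter distortion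
has `limsup` at most `D`. -/
noncomputable def RDE {S T : Type} [Fintype S]
    (law : ∀ n : ℕ, (Fin n → S) → ℝ) (ρ : S → T → ℝ) (D : ℝ) : ℝ :=
  sInf {R : ℝ |
    ∃ enc : ∀ n : ℕ, (Fin n → S) → Fin (2 ^ ⌊(n : ℝ) * R⌋₊),
    ∃ dec : ∀ n : ℕ, Fin (2 ^ ⌊(n : ℝ) * R⌋₊) → (Fin n → T),
      Filter.limsup (fun n : ℕ =>
        ∑ x : Fin n → S, law n x * ((n : ℝ)⁻¹ *
          ∑ i, ρ (x i) (dec n (enc n x) i))) Filter.atTop ≤ D}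

/-- Operational rate-distortion function of the Markov source `X_{[π',P]}`. -/
noncomputable def markovRDE {𝕏 : Type} [Fintype 𝕏]
    (π' : 𝕏 → ℝ) (P : 𝕏 → 𝕏 → ℝ) (d : 𝕏 → 𝕏 → ℝ) (D : ℝ) : ℝ :=
  RDE (markovLaw π' P) d D

/-- Operational rate-distortion function of the block-independent approximation
(BIA) `X^T_{[π',P]}` source. -/
noncomputable def biaRDE {𝕏 : Type} [Fintype 𝕏]
    (π' : 𝕏 → ℝ) (P : 𝕏 → 𝕏 → ℝ) (d : 𝕏 → 𝕏 → ℝ) (T : ℕ) (Δ : ℝ) : ℝ :=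
  RDE (iidLaw (markovLaw π' P T)) (blockDist d T) Δ

/-- Operational rate-distortion function of the vector i.i.d. `J_τ(X^T_{[π',P]})` source. -/
noncomputable def projRDE {𝕏 : Type} [Fintype 𝕏] [DecidableEq 𝕏]
    (π' : 𝕏 → ℝ) (P : 𝕏 → 𝕏 → ℝ) (d : 𝕏 → 𝕏 → ℝ) (T τ : ℕ) (Δ : ℝ) : ℝ :=
  RDE (iidLaw (projDist (markovLaw π' P T) τ)) (blockDist d (T - τ)) Δ

/-- `δ^{(τ)}`: the `l¹` distance between the distribution of `X_{τ+1}` under `X_{[π',P]}`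
and the stationary distribution `π`. -/
def l1dev {𝕏 : Type} [Fintype 𝕏] [DecidableEq 𝕏]
    (π' : 𝕏 → ℝ) (P : 𝕏 → 𝕏 → ℝ) (π : 𝕏 → ℝ) (τ : ℕ) : ℝ :=
  ∑ x, |stepDist π' P τ x - π x|


/-!
Dropping the first `τ` letters of each block cannot increase the additive distortion, so every
code for the BIA source induces a code for the `J_τ` source at the same rate (its encoder completes
the input block optimally): `R^E_{J_τ} ≤ R^E_{BIA}`. Conversely, a code for the `J_τ` source
becomes a code for the BIA source with exactly the same distortion once the first `τ` letters of
each block are sent uncoded, which costs at most `|𝕏|^τ` extra bits per block. Hence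
`0 ≤ R^E_{BIA}(TD) - R^E_{J_τ}(TD) ≤ |𝕏|^τ` for all `T ≥ τ`, and dividing by `T` gives the limit.
-/

section Coding

variable {S T : Type} [Fintype S]

noncomputable def avgDistortion (law : ∀ n : ℕ, (Fin n → S) → ℝ) (ρ : S → T → ℝ) (n : ℕ)
    (f : (Fin n → S) → Fin n → T) : ℝ :=
  ∑ x : Fin n → S, law n x * ((n : ℝ)⁻¹ * ∑ i, ρ (x i) (f x i))

def achievableRates (law : ∀ n : ℕ, (Fin n → S) → ℝ) (ρ : S → T → ℝ) (D : ℝ) : Set ℝ :=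
  {R : ℝ |
    ∃ enc : ∀ n : ℕ, (Fin n → S) → Fin (2 ^ ⌊(n : ℝ) * R⌋₊),
    ∃ dec : ∀ n : ℕ, Fin (2 ^ ⌊(n : ℝ) * R⌋₊) → (Fin n → T),
      limsup (fun n => avgDistortion law ρ n (dec n ∘ enc n)) atTop ≤ D}

variable {law : ∀ n : ℕ, (Fin n → S) → ℝ} {ρ : S → T → ℝ} {D R R' : ℝ}

theorem RDE_eq_sInf_achievableRates : RDE law ρ D = sInf (achievableRates law ρ D) := rfl

theorem exists_comp_eq_of_ncard_range_le {α β : Type} [Finite α] [Nonempty β] (f : α → β)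
    {m : ℕ} (h : (Set.range f).ncard ≤ m) : ∃ (e : α → Fin m) (g : Fin m → β), g ∘ e = f := by
  rw [← Nat.card_coe_set_eq] at h
  let e : α → Fin m := fun x => Fin.castLE h (Finite.equivFin (Set.range f) ⟨f x, x, rfl⟩)
  have hfe : Function.FactorsThrough f e := fun x y hxy =>
    congrArg Subtype.val ((Finite.equivFin _).injective (Fin.castLE_injective h hxy))
  exact ⟨e, Function.extend e f (fun _ => Classical.arbitrary β), funext (hfe.extend_apply _)⟩

theorem ncard_range_comp_le {α β γ : Type} [Finite β] (g : β → γ) (e : α → β) :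
    (Set.range (g ∘ e)).ncard ≤ Nat.card β := by
  rw [← Nat.card_coe_set_eq]
  exact (Nat.card_mono (Set.finite_range g) (Set.range_comp_subset_range e g)).trans
    (Finite.card_range_le g)

theorem mem_achievableRates_iff [Nonempty T] :
    R ∈ achievableRates law ρ D ↔ ∃ f : ∀ n : ℕ, (Fin n → S) → Fin n → T,
      (∀ n, (Set.range (f n)).ncard ≤ 2 ^ ⌊(n : ℝ) * R⌋₊) ∧
        limsup (fun n => avgDistortion law ρ n (f n)) atTop ≤ D := by
  constructor
  · rintro ⟨enc, dec, hD⟩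
    refine ⟨fun n => dec n ∘ enc n, fun n => ?_, hD⟩
    simpa using ncard_range_comp_le (dec n) (enc n)
  · rintro ⟨f, hcard, hD⟩
    choose enc dec hfac using fun n => exists_comp_eq_of_ncard_range_le (f n) (hcard n)
    exact ⟨enc, dec, by simpa only [hfac] using hD⟩

theorem mem_achievableRates_of_floor_le [Nonempty T]
    (hfloor : ∀ n : ℕ, ⌊(n : ℝ) * R⌋₊ ≤ ⌊(n : ℝ) * R'⌋₊) (hR : R ∈ achievableRates law ρ D) :
    R' ∈ achievableRates law ρ D := by
  obtain ⟨f, hcard, hD⟩ := mem_achievableRates_iff.1 hR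
  exact mem_achievableRates_iff.2
    ⟨f, fun n => (hcard n).trans (Nat.pow_le_pow_right two_pos (hfloor n)), hD⟩

theorem mem_achievableRates_of_le [Nonempty T] (hRR' : R ≤ R')
    (hR : R ∈ achievableRates law ρ D) : R' ∈ achievableRates law ρ D :=
  mem_achievableRates_of_floor_le
    (fun n => Nat.floor_le_floor (mul_le_mul_of_nonneg_left hRR' n.cast_nonneg)) hR

theorem mem_achievableRates_of_nonpos [Nonempty T] (hR : R ≤ 0) (hR' : R' ≤ 0)
    (hmem : R ∈ achievableRates law ρ D) : R' ∈ achievableRates law ρ D := by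
  have hzero : ∀ c : ℝ, c ≤ 0 → ∀ n : ℕ, ⌊(n : ℝ) * c⌋₊ = 0 := fun c hc n =>
    Nat.floor_of_nonpos (mul_nonpos_of_nonneg_of_nonpos n.cast_nonneg hc)
  exact mem_achievableRates_of_floor_le (fun n => by rw [hzero R hR, hzero R' hR']) hmem

/-- If a negative rate is achievable then so are all of them, and `sInf` of the unbounded set is
the junk value `0`. -/
theorem RDE_nonneg [Nonempty T] : 0 ≤ RDE law ρ D := by
  rw [RDE_eq_sInf_achievableRates]
  by_cases hbdd : BddBelow (achievableRates law ρ D)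
  · refine Real.sInf_nonneg fun R hR => not_lt.1 fun hneg => ?_
    obtain ⟨b, hb⟩ := hbdd
    have := hb (mem_achievableRates_of_nonpos hneg.le (min_le_right (b - 1) 0) hR)
    linarith [min_le_left (b - 1) 0]
  · rw [Real.sInf_of_not_bddBelow hbdd]

theorem RDE_le_of_mem (hR : R ∈ achievableRates law ρ D) (h0 : 0 ≤ R) : RDE law ρ D ≤ R := by
  rw [RDE_eq_sInf_achievableRates]
  by_cases hbdd : BddBelow (achievableRates law ρ D)
  · exact csInf_le hbdd hR
  · rwa [Real.sInf_of_not_bddBelow hbdd]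

theorem avgDistortion_id_eq_zero {ρ : S → S → ℝ} (hρ : ∀ s, ρ s s = 0) (n : ℕ) :
    avgDistortion law ρ n id = 0 :=
  Finset.sum_eq_zero fun x _ => by simp [hρ]

theorem card_mem_achievableRates [Nonempty S] {ρ : S → S → ℝ} (hρ : ∀ s, ρ s s = 0)
    (hD : 0 ≤ D) : (Fintype.card S : ℝ) ∈ achievableRates law ρ D := by
  refine mem_achievableRates_iff.2 ⟨fun _ => id, fun n => ?_, ?_⟩
  · calc (Set.range (id : (Fin n → S) → Fin n → S)).ncard ≤ Fintype.card S ^ n :=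
          (ncard_range_comp_le id id).trans_eq (by simp)
      _ ≤ (2 ^ Fintype.card S) ^ n := Nat.pow_le_pow_left Nat.lt_two_pow_self.le n
      _ = 2 ^ ⌊(n : ℝ) * Fintype.card S⌋₊ := by
          rw [← Nat.cast_mul, Nat.floor_natCast, ← pow_mul, mul_comm]
  · simpa only [avgDistortion_id_eq_zero hρ, limsup_const] using hD

end Coding

section Comparison

variable {S T S' T' : Type} [Fintype S] [Fintype S']
  {law : ∀ n : ℕ, (Fin n → S) → ℝ} {ρ : S → T → ℝ}
  {law' : ∀ n : ℕ, (Fin n → S') → ℝ} {ρ' : S' → T' → ℝ} {D D' : ℝ}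

theorem RDE_le_RDE_of_subset [Nonempty T] (hne : (achievableRates law ρ D).Nonempty)
    (hsub : achievableRates law ρ D ⊆ achievableRates law' ρ' D') :
    RDE law' ρ' D' ≤ RDE law ρ D := by
  by_cases hbdd : BddBelow (achievableRates law' ρ' D')
  · exact csInf_le_csInf hbdd hne hsub
  · rw [RDE_eq_sInf_achievableRates, Real.sInf_of_not_bddBelow hbdd]
    exact RDE_nonneg

theorem RDE_le_RDE_add [Nonempty T'] {C : ℝ} (hne : (achievableRates law' ρ' D').Nonempty)
    (hC : 0 ≤ C)
    (hadd : ∀ R ∈ achievableRates law' ρ' D', 0 ≤ R → R + C ∈ achievableRates law ρ D) :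
    RDE law ρ D ≤ RDE law' ρ' D' + C := by
  refine le_of_forall_pos_lt_add fun ε hε => ?_
  obtain ⟨R, hR, hlt⟩ := Real.lt_sInf_add_pos hne hε
  have hmax : max R 0 ∈ achievableRates law' ρ' D' :=
    mem_achievableRates_of_le (le_max_left _ _) hR
  have hmax_lt : max R 0 < RDE law' ρ' D' + ε :=
    max_lt hlt (by linarith [RDE_nonneg (law := law') (ρ := ρ') (D := D')])
  calc RDE law ρ D ≤ max R 0 + C := RDE_le_of_mem (hadd _ hmax (le_max_right _ _)) (by positivity)
    _ < RDE law' ρ' D' + C + ε := by linarith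

end Comparison

section LawMap

variable {S S' : Type} [Fintype S] [DecidableEq S']

def lawMap (φ : S → S') (q : S → ℝ) (r : S') : ℝ := ∑ s, if φ s = r then q s else 0

theorem lawMap_nonneg {q : S → ℝ} (hq : ∀ s, 0 ≤ q s) (φ : S → S') (r : S') :
    0 ≤ lawMap φ q r :=
  Finset.sum_nonneg fun s _ => by split_ifs <;> simp [hq]

theorem sum_lawMap_mul [Fintype S'] (φ : S → S') (q : S → ℝ) (f : S' → ℝ) :
    ∑ r, lawMap φ q r * f r = ∑ s, q s * f (φ s) := by
  simp only [lawMap, Finset.sum_mul, ite_mul, zero_mul]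
  rw [Finset.sum_comm]
  simp

theorem iidLaw_nonneg {q : S → ℝ} (hq : ∀ s, 0 ≤ q s) (n : ℕ) (x : Fin n → S) :
    0 ≤ iidLaw q n x :=
  Finset.prod_nonneg fun i _ => hq (x i)

theorem sum_iidLaw (q : S → ℝ) (n : ℕ) : ∑ x : Fin n → S, iidLaw q n x = (∑ s, q s) ^ n := by
  simp [iidLaw, ← Fintype.prod_sum]

theorem iidLaw_lawMap [Fintype S'] (φ : S → S') (q : S → ℝ) (n : ℕ) :
    iidLaw (lawMap φ q) n = lawMap (fun x => φ ∘ x) (iidLaw q n) := by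
  funext r
  simp only [iidLaw, lawMap, Fintype.prod_sum, Finset.prod_ite_zero, Finset.mem_univ,
    true_implies, funext_iff, Function.comp_apply]

end LawMap

section Distortion

variable {S T : Type} [Fintype S] {law : ∀ n : ℕ, (Fin n → S) → ℝ} {ρ : S → T → ℝ}

theorem avgDistortion_nonneg {n : ℕ} (hlaw : ∀ x, 0 ≤ law n x) (hρ : ∀ s t, 0 ≤ ρ s t)
    (f : (Fin n → S) → Fin n → T) : 0 ≤ avgDistortion law ρ n f :=
  Finset.sum_nonneg fun x _ => mul_nonneg (hlaw x)
    (mul_nonneg (by positivity) (Finset.sum_nonneg fun i _ => hρ _ _))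

theorem avgDistortion_le {n : ℕ} {B : ℝ} (hB : 0 ≤ B) (hlaw0 : ∀ x, 0 ≤ law n x)
    (hlaw1 : ∑ x, law n x = 1) (hρ : ∀ s t, ρ s t ≤ B) (f : (Fin n → S) → Fin n → T) :
    avgDistortion law ρ n f ≤ B := by
  have hmean : ∀ x : Fin n → S, (n : ℝ)⁻¹ * ∑ i, ρ (x i) (f x i) ≤ B := fun x => by
    rcases n.eq_zero_or_pos with rfl | hn
    · simpa using hB
    · rw [inv_mul_le_iff₀ (by exact_mod_cast hn)]
      simpa using Finset.sum_le_sum fun i (_ : i ∈ univ) => hρ (x i) (f x i)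
  calc avgDistortion law ρ n f ≤ ∑ x, law n x * B :=
        Finset.sum_le_sum fun x _ => mul_le_mul_of_nonneg_left (hmean x) (hlaw0 x)
    _ = B := by rw [← Finset.sum_mul, hlaw1, one_mul]

theorem isBoundedUnder_avgDistortion [Finite T] (hlaw0 : ∀ n x, 0 ≤ law n x)
    (hlaw1 : ∀ n, ∑ x, law n x = 1) (f : ∀ n : ℕ, (Fin n → S) → Fin n → T) :
    IsBoundedUnder (· ≤ ·) atTop fun n => avgDistortion law ρ n (f n) := by
  obtain ⟨B, hB⟩ := Finite.bddAbove_range (Function.uncurry ρ)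
  exact isBoundedUnder_of ⟨max B 0, fun n => avgDistortion_le (le_max_right _ _) (hlaw0 n)
    (hlaw1 n) (fun s t => (hB ⟨(s, t), rfl⟩).trans (le_max_left _ _)) (f n)⟩

theorem avgDistortion_lawMap {S' T' : Type} [Fintype S'] [DecidableEq S'] (φ : S → S')
    (ρ' : S' → T' → ℝ) (n : ℕ) (g : (Fin n → S') → Fin n → T') :
    avgDistortion (fun n => lawMap (fun x => φ ∘ x) (law n)) ρ' n g
      = avgDistortion law (fun s => ρ' (φ s)) n (fun x => g (φ ∘ x)) :=
  sum_lawMap_mul _ _ _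

end Distortion

section Projection

variable {S T S' T' : Type} [Fintype S] [Fintype S'] [DecidableEq S']
  {law : ∀ n : ℕ, (Fin n → S) → ℝ} {ρ : S → T → ℝ} {ρ' : S' → T' → ℝ} {D R : ℝ}

theorem mem_achievableRates_lawMap [Nonempty S] [Finite T] [Nonempty T] [Nonempty T']
    (hlaw0 : ∀ n x, 0 ≤ law n x) (hlaw1 : ∀ n, ∑ x, law n x = 1)
    (φ : S → S') (ψ : T → T') (hρ'0 : ∀ s t, 0 ≤ ρ' s t) (hρ : ∀ s t, ρ' (φ s) (ψ t) ≤ ρ s t)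
    (hR : R ∈ achievableRates law ρ D) :
    R ∈ achievableRates (fun n => lawMap (fun x => φ ∘ x) (law n)) ρ' D := by
  obtain ⟨f, hcard, hD⟩ := mem_achievableRates_iff.1 hR
  let err : ∀ n : ℕ, (Fin n → S') → (Fin n → S) → ℝ := fun n r x => ∑ i, ρ' (r i) (ψ (f n x i))
  choose fill hfill using fun n r => Finite.exists_min (err n r)
  let f' : ∀ n : ℕ, (Fin n → S') → Fin n → T' := fun n r => ψ ∘ f n (fill n r)
  have hle : ∀ n, avgDistortion (fun n => lawMap (fun x => φ ∘ x) (law n)) ρ' n (f' n)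
      ≤ avgDistortion law ρ n (f n) := fun n => by
    rw [avgDistortion_lawMap]
    refine Finset.sum_le_sum fun x _ => mul_le_mul_of_nonneg_left
      (mul_le_mul_of_nonneg_left ?_ (by positivity)) (hlaw0 n x)
    exact (hfill n (φ ∘ x) x).trans (Finset.sum_le_sum fun i _ => hρ _ _)
  refine mem_achievableRates_iff.2 ⟨f', fun n => ?_, ?_⟩
  · calc (Set.range (f' n)).ncard ≤ (Set.range (f n)).ncard := by
          rw [show f' n = (ψ ∘ ·) ∘ f n ∘ fill n from rfl, Set.range_comp]
          exact (Set.ncard_image_le (Set.toFinite _)).trans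
            (Set.ncard_le_ncard (Set.range_comp_subset_range _ _))
      _ ≤ 2 ^ ⌊(n : ℝ) * R⌋₊ := hcard n
  · refine (limsup_le_limsup (Eventually.of_forall hle) ?_
      (isBoundedUnder_avgDistortion hlaw0 hlaw1 f)).trans hD
    exact isCoboundedUnder_le_of_le atTop fun n =>
      avgDistortion_nonneg (lawMap_nonneg (hlaw0 n) _) hρ'0 (f' n)

theorem add_card_mem_achievableRates {H : Type} [Fintype H] [Nonempty T] [Nonempty T']
    (φ : S → S') (h : S → H) (c : H → T' → T) (hρ : ∀ s t, ρ s (c (h s) t) = ρ' (φ s) t)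
    (hR0 : 0 ≤ R) (hR : R ∈ achievableRates (fun n => lawMap (fun x => φ ∘ x) (law n)) ρ' D) :
    R + Fintype.card H ∈ achievableRates law ρ D := by
  obtain ⟨g, hcard, hD⟩ := mem_achievableRates_iff.1 hR
  let glue : ∀ n : ℕ, (Fin n → H) × (Fin n → T') → Fin n → T := fun _ p i => c (p.1 i) (p.2 i)
  let split : ∀ n : ℕ, (Fin n → S) → (Fin n → H) × (Fin n → T') := fun n x => (h ∘ x, g n (φ ∘ x))
  refine mem_achievableRates_iff.2 ⟨fun n => glue n ∘ split n, fun n => ?_, ?_⟩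
  · have hsplit : Set.range (split n) ⊆ Set.univ ×ˢ Set.range (g n) :=
      Set.range_subset_iff.2 fun x => ⟨trivial, φ ∘ x, rfl⟩
    calc (Set.range (glue n ∘ split n)).ncard ≤ (Set.range (split n)).ncard := by
          rw [Set.range_comp]; exact Set.ncard_image_le
      _ ≤ (Set.univ ×ˢ Set.range (g n)).ncard := Set.ncard_le_ncard hsplit
      _ ≤ (2 ^ Fintype.card H) ^ n * 2 ^ ⌊(n : ℝ) * R⌋₊ := by
          rw [Set.ncard_prod, Set.ncard_univ, Nat.card_eq_fintype_card, Fintype.card_fun,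
            Fintype.card_fin]
          exact Nat.mul_le_mul (Nat.pow_le_pow_left Nat.lt_two_pow_self.le n) (hcard n)
      _ = 2 ^ ⌊(n : ℝ) * (R + Fintype.card H)⌋₊ := by
          rw [mul_add, ← Nat.cast_mul, Nat.floor_add_natCast (by positivity), pow_add,
            ← pow_mul, mul_comm, mul_comm (Fintype.card H)]
  · convert hD using 3 with n
    rw [avgDistortion_lawMap]
    exact Finset.sum_congr rfl fun x _ => by simp [glue, split, hρ]

end Projection

section Markov

variable {𝕏 : Type} {P : 𝕏 → 𝕏 → ℝ}

theorem markovLaw_nonneg {μ : 𝕏 → ℝ} (hμ : ∀ x, 0 ≤ μ x) (hP : ∀ x y, 0 ≤ P x y) (n : ℕ)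
    (x : Fin n → 𝕏) : 0 ≤ markovLaw μ P n x := by
  cases n with
  | zero => exact zero_le_one
  | succ n => exact mul_nonneg (hμ _) (Finset.prod_nonneg fun i _ => hP _ _)

theorem markovLaw_succ (μ : 𝕏 → ℝ) (n : ℕ) (x : Fin (n + 1) → 𝕏) :
    markovLaw μ P (n + 1) x = μ (x 0) * markovLaw (P (x 0)) P n (Fin.tail x) := by
  cases n with
  | zero => simp [markovLaw]
  | succ n =>
    simp only [markovLaw, Fin.prod_univ_succ, Fin.tail, Fin.succ_castSucc]
    rfl

theorem sum_markovLaw [Fintype 𝕏] (hP : IsStochastic P) {μ : 𝕏 → ℝ} (hμ : ∑ x, μ x = 1)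
    (n : ℕ) : ∑ x : Fin n → 𝕏, markovLaw μ P n x = 1 := by
  induction n generalizing μ with
  | zero => simp [markovLaw]
  | succ n ih =>
    rw [← (Fin.consEquiv fun _ => 𝕏).sum_comp, Fintype.sum_prod_type]
    simp only [Fin.consEquiv, Equiv.coe_fn_mk, markovLaw_succ, Fin.cons_zero, Fin.tail_cons,
      ← Finset.mul_sum, ih (hP.2 _), mul_one, hμ]

end Markov

section Blocks

variable {α : Type} {T τ : ℕ}

def blockHead (hτ : τ ≤ T) (s : Fin T → α) : Fin τ → α := fun i => s (Fin.castLE hτ i)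

def blockTail (τ : ℕ) (s : Fin T → α) : Fin (T - τ) → α := fun i => s ⟨τ + i, by omega⟩

def blockJoin (h : Fin τ → α) (t : Fin (T - τ) → α) : Fin T → α :=
  fun j => if hj : j.1 < τ then h ⟨j, hj⟩ else t ⟨j - τ, by omega⟩

theorem blockHead_blockJoin (hτ : τ ≤ T) (h : Fin τ → α) (t : Fin (T - τ) → α) :
    blockHead hτ (blockJoin h t) = h := by
  funext i
  simp [blockHead, blockJoin]

theorem blockTail_blockJoin (h : Fin τ → α) (t : Fin (T - τ) → α) :
    blockTail τ (blockJoin h t) = t := by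
  funext i
  simp [blockTail, blockJoin]

theorem Fin.sum_univ_eq_sum_castLE_add_sum {M : Type} [AddCommMonoid M] (hτ : τ ≤ T)
    (f : Fin T → M) :
    ∑ j, f j = ∑ i : Fin τ, f (Fin.castLE hτ i) + ∑ i : Fin (T - τ), f ⟨τ + i, by omega⟩ := by
  rw [← (finCongr (Nat.add_sub_cancel' hτ)).sum_comp, Fin.sum_univ_add]
  rfl

variable {d : α → α → ℝ}

theorem blockDist_eq_head_add_tail (hτ : τ ≤ T) (s t : Fin T → α) :
    blockDist d T s t = blockDist d τ (blockHead hτ s) (blockHead hτ t)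
      + blockDist d (T - τ) (blockTail τ s) (blockTail τ t) :=
  Fin.sum_univ_eq_sum_castLE_add_sum hτ _

theorem blockDist_self (hd : ∀ x, d x x = 0) {n : ℕ} (s : Fin n → α) : blockDist d n s s = 0 :=
  Finset.sum_eq_zero fun _ _ => hd _

theorem blockDist_blockTail_le (hd : ∀ x y, 0 ≤ d x y) (hτ : τ ≤ T) (s t : Fin T → α) :
    blockDist d (T - τ) (blockTail τ s) (blockTail τ t) ≤ blockDist d T s t := by
  rw [blockDist_eq_head_add_tail hτ]
  exact le_add_of_nonneg_left (Finset.sum_nonneg fun _ _ => hd _ _)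

theorem blockDist_blockJoin_blockHead (hd : ∀ x, d x x = 0) (hτ : τ ≤ T) (s : Fin T → α)
    (t : Fin (T - τ) → α) :
    blockDist d T s (blockJoin (blockHead hτ s) t) = blockDist d (T - τ) (blockTail τ s) t := by
  rw [blockDist_eq_head_add_tail hτ, blockHead_blockJoin, blockTail_blockJoin,
    blockDist_self hd, zero_add]

theorem projDist_eq_lawMap [Fintype α] [DecidableEq α] (q : (Fin T → α) → ℝ) (τ : ℕ) :
    projDist q τ = lawMap (blockTail τ) q := by
  funext r
  simp only [projDist, lawMap, funext_iff, blockTail]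

theorem iidLaw_projDist [Fintype α] [DecidableEq α] (q : (Fin T → α) → ℝ) (τ : ℕ) :
    iidLaw (projDist q τ) = fun n => lawMap (fun x => blockTail τ ∘ x) (iidLaw q n) := by
  funext n
  rw [projDist_eq_lawMap, iidLaw_lawMap]

end Blocks

section BlockIndependentApproximation

variable {𝕏 : Type} [Fintype 𝕏] [DecidableEq 𝕏] {d : 𝕏 → 𝕏 → ℝ}
  {P : 𝕏 → 𝕏 → ℝ} {π' : 𝕏 → ℝ} {T τ : ℕ} {Δ : ℝ}

theorem projRDE_le_biaRDE [Nonempty 𝕏] (hdnn : ∀ x y, 0 ≤ d x y) (hdiag : ∀ x, d x x = 0)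
    (hP : IsStochastic P) (hπ' : IsProbDist π') (hτ : τ ≤ T) (hΔ : 0 ≤ Δ) :
    projRDE π' P d T τ Δ ≤ biaRDE π' P d T Δ := by
  have hq0 := markovLaw_nonneg hπ'.1 hP.1 T
  have hq1 := sum_markovLaw hP hπ'.2 T
  rw [projRDE, biaRDE, iidLaw_projDist]
  refine RDE_le_RDE_of_subset ⟨_, card_mem_achievableRates (blockDist_self hdiag) hΔ⟩
    fun R hR => mem_achievableRates_lawMap (iidLaw_nonneg hq0)
      (fun n => by rw [sum_iidLaw, hq1, one_pow]) (blockTail τ) (blockTail τ)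
      (fun _ _ => Finset.sum_nonneg fun _ _ => hdnn _ _) (blockDist_blockTail_le hdnn hτ) hR

theorem biaRDE_le_projRDE_add [Nonempty 𝕏] (hdiag : ∀ x, d x x = 0) (hτ : τ ≤ T) (hΔ : 0 ≤ Δ) :
    biaRDE π' P d T Δ ≤ projRDE π' P d T τ Δ + Fintype.card 𝕏 ^ τ := by
  rw [projRDE, biaRDE, iidLaw_projDist]
  refine RDE_le_RDE_add ⟨_, card_mem_achievableRates (blockDist_self hdiag) hΔ⟩ (by positivity)
    fun R hR hR0 => ?_
  simpa using add_card_mem_achievableRates (blockTail τ) (blockHead hτ) blockJoin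
    (blockDist_blockJoin_blockHead hdiag hτ) hR0 hR

end BlockIndependentApproximation

theorem bia_rd_minus_proj_rd_tendsto_zero_general
    {𝕏 : Type} [Fintype 𝕏] [DecidableEq 𝕏] (hcard : 2 ≤ Fintype.card 𝕏)
    (d : 𝕏 → 𝕏 → ℝ) (hdnn : ∀ x y, 0 ≤ d x y)
    (hdiag : ∀ x, d x x = 0)
    (P : 𝕏 → 𝕏 → ℝ) (hP : IsStochastic P)
    (π' : 𝕏 → ℝ) (hπ' : IsProbDist π')
    (τ : ℕ) (D : ℝ) (hD : 0 < D) :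
    Filter.Tendsto (fun T : ℕ =>
        (T : ℝ)⁻¹ * biaRDE π' P d T ((T : ℝ) * D) -
          (T : ℝ)⁻¹ * projRDE π' P d T τ ((T : ℝ) * D))
      Filter.atTop (nhds 0) := by
  have : Nonempty 𝕏 := Fintype.card_pos_iff.1 (by omega)
  have hgap : ∀ᶠ T : ℕ in atTop,
      0 ≤ biaRDE π' P d T (T * D) - projRDE π' P d T τ (T * D) ∧
        biaRDE π' P d T (T * D) - projRDE π' P d T τ (T * D) ≤ Fintype.card 𝕏 ^ τ := by
    filter_upwards [eventually_ge_atTop τ] with T hτ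
    have hTD : 0 ≤ (T : ℝ) * D := by positivity
    exact ⟨sub_nonneg.2 (projRDE_le_biaRDE hdnn hdiag hP hπ' hτ hTD),
      sub_le_iff_le_add'.2 (biaRDE_le_projRDE_add hdiag hτ hTD)⟩
  refine squeeze_zero' ?_ ?_ (tendsto_const_div_atTop_nhds_zero_nat ((Fintype.card 𝕏 : ℝ) ^ τ))
  · filter_upwards [hgap] with T hT
    rw [← mul_sub]
    exact mul_nonneg (by positivity) hT.1
  · filter_upwards [hgap] with T hT
    rw [← mul_sub, div_eq_inv_mul]
    exact mul_le_mul_of_nonneg_left hT.2 (by positivity)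

/-- **Equation (29).** For every fixed `τ ≥ 1` and `D > 0`,
`lim_{T→∞} [ (1/T) R^E_{X^T_{[π',P]}}(TD) − (1/T) R^E_{J_τ(X^T_{[π',P]})}(TD) ] = 0`. -/
theorem bia_rd_minus_proj_rd_tendsto_zero
    {𝕏 : Type} [Fintype 𝕏] [DecidableEq 𝕏] (hcard : 2 ≤ Fintype.card 𝕏)
    (d : 𝕏 → 𝕏 → ℝ) (hdnn : ∀ x y, 0 ≤ d x y)
    (hdiag : ∀ x, d x x = 0) (hdpos : ∀ x y, x ≠ y → 0 < d x y)
    (P : 𝕏 → 𝕏 → ℝ) (hP : IsStochastic P) (hPia : IsIrreducibleAperiodic P)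
    (π : 𝕏 → ℝ) (hπ : IsProbDist π) (hπstat : IsStationaryDist P π)
    (π' : 𝕏 → ℝ) (hπ' : IsProbDist π')
    (τ : ℕ) (hτ : 1 ≤ τ) (D : ℝ) (hD : 0 < D) :
    Filter.Tendsto (fun T : ℕ =>
        (T : ℝ)⁻¹ * biaRDE π' P d T ((T : ℝ) * D) -
          (T : ℝ)⁻¹ * projRDE π' P d T τ ((T : ℝ) * D))
      Filter.atTop (nhds 0) :=
  bia_rd_minus_proj_rd_tendsto_zero_general hcard d hdnn hdiag P hP π' hπ' τ D hD
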